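/- Let A₁, A₂, A₃ be rank-3 real 3×4 matrices with focal points in general position (distinct, not collinear). Then every point u = (u₁,u₂,u₃) in the multiview variety V_A ⊂ (P²)³ (the closure of the image of X ↦ (A₁X,A₂X,A₃X)) is triangulable: there is a pair of indices (j,k) such that the 6×6 matrix B^{jk} = [[A_j,u_j,0],[A_k,0,u_k]] has rank 5. -/

import Mathlib

def triMat (A₁ A₂ : Matrix (Fin 3) (Fin 4) ℝ) (u₁ u₂ : Fin 3 → ℝ) :
    Matrix (Fin 6) (Fin 6) ℝ :=
  Matrix.of fun i j =>
    if hi : (i : ℕ) < 3 then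
      if hj : (j : ℕ) < 4 then A₁ ⟨i, hi⟩ ⟨j, hj⟩
      else if (j : ℕ) = 4 then u₁ ⟨i, hi⟩ else 0
    else
      if hj : (j : ℕ) < 4 then A₂ ⟨(i : ℕ) - 3, by have := i.isLt; omega⟩ ⟨j, hj⟩
      else if (j : ℕ) = 4 then 0 else u₂ ⟨(i : ℕ) - 3, by have := i.isLt; omega⟩

/-- The quotient topology on the projectivization of `ℝ³` (as a quotient of the
subspace of nonzero vectors). -/
noncomputable instance : TopologicalSpace (Projectivization ℝ (Fin 3 → ℝ)) :=
  instTopologicalSpaceQuotient (s := projectivizationSetoid ℝ (Fin 3 → ℝ))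

/-! The condition `det B^{jk}(u) = 0` is closed, and it holds on the image of the camera map:
if `a u_j = A_j X` and `b u_k = A_k X`, then `(X, -a, -b)` lies in the kernel of `B^{jk}`. Since
the quotient map onto `(P²)³` is open, it holds on the closure, so `rank B^{jk} ≤ 5`.
Conversely, when `u_j` is not the epipole `A_j f_k` (the image of the other centre), a kernel vector
of `B^{jk}` whose last coordinate vanishes must be zero, hence `rank B^{jk} ≥ 5`. As the centres are
linearly independent, the two epipoles `A₀ f₁`, `A₀ f₂` are distinct points of `P²`, so `u₀` avoids
one of them. -/

open Matrix Module Submodule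

theorem Matrix.rank_add_finrank_ker {K m n : Type*} [Field K] [Fintype m] [Fintype n]
    (B : Matrix m n K) : B.rank + finrank K (LinearMap.ker B.mulVecLin) = Fintype.card n := by
  rw [rank, LinearMap.finrank_range_add_finrank_ker, finrank_fintype_fun_eq_card]

theorem Matrix.rank_lt_card_of_det_eq_zero {K n : Type*} [Field K] [Fintype n] [DecidableEq n]
    (B : Matrix n n K) (h : B.det = 0) : B.rank < Fintype.card n := by
  obtain ⟨v, hv, hBv⟩ := exists_mulVec_eq_zero_iff.mpr h
  have : 0 < finrank K (LinearMap.ker B.mulVecLin) :=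
    finrank_pos_iff_exists_ne_zero.mpr ⟨⟨v, hBv⟩, fun h0 => hv (congrArg Subtype.val h0)⟩
  have := B.rank_add_finrank_ker
  omega

theorem Matrix.card_le_rank_add_one_of_mulVec_eq_zero {K m n : Type*} [Field K] [Fintype m]
    [Fintype n] (B : Matrix m n K) (j : n) (h : ∀ y, B *ᵥ y = 0 → y j = 0 → y = 0) :
    Fintype.card n ≤ B.rank + 1 := by
  have hinj : Function.Injective ((LinearMap.proj j : (n → K) →ₗ[K] K).domRestrict
      (LinearMap.ker B.mulVecLin)) := by
    rw [← LinearMap.ker_eq_bot, LinearMap.ker_eq_bot']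
    rintro ⟨y, hy⟩ hyj
    exact Subtype.ext (h y hy hyj)
  have hle := LinearMap.finrank_le_finrank_of_injective hinj
  rw [finrank_self] at hle
  have := B.rank_add_finrank_ker
  omega

theorem Matrix.ker_mulVecLin_eq_span_singleton {K m n : Type*} [Field K] [Fintype m] [Fintype n]
    (M : Matrix m n K) (hM : M.rank + 1 = Fintype.card n) {v : n → K} (hv : v ≠ 0)
    (hMv : M *ᵥ v = 0) : LinearMap.ker M.mulVecLin = span K {v} := by
  refine (eq_of_le_of_finrank_le ?_ ?_).symm
  · rwa [span_le, Set.singleton_subset_iff]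
  · have := M.rank_add_finrank_ker
    rw [finrank_span_singleton hv]
    omega

theorem Fin.append_eq_zero_iff {α : Type*} [Zero α] {m n : ℕ} {p : Fin m → α}
    {q : Fin n → α} : Fin.append p q = 0 ↔ p = 0 ∧ q = 0 := by
  refine ⟨fun h => ⟨funext fun i => ?_, funext fun i => ?_⟩,
    fun ⟨hp, hq⟩ => funext fun i => ?_⟩
  · simpa using congrFun h (Fin.castAdd n i)
  · simpa using congrFun h (Fin.natAdd m i)
  · refine Fin.addCases (fun i => ?_) (fun i => ?_) i <;> simp [hp, hq]

theorem Fin.append_castAdd_natAdd_two {α : Type*} {m : ℕ} (y : Fin (m + 2) → α) :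
    Fin.append (fun i => y (Fin.castAdd 2 i)) ![y (Fin.natAdd m 0), y (Fin.natAdd m 1)] =
      y := by
  refine Eq.trans ?_ Fin.append_castAdd_natAdd
  congr 1
  ext i
  fin_cases i <;> rfl

theorem disjoint_map_ker_of_ker_eq_span {K V W : Type*} [Field K] [AddCommGroup V] [Module K V]
    [AddCommGroup W] [Module K W] {A : Fin 3 → V →ₗ[K] W} {f : Fin 3 → V}
    (hf : LinearIndependent K f) (hA : ∀ i, LinearMap.ker (A i) = span K {f i}) :
    Disjoint ((LinearMap.ker (A 1)).map (A 0)) ((LinearMap.ker (A 2)).map (A 0)) := by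
  rw [hA 1, hA 2, map_span, map_span, Set.image_singleton, Set.image_singleton, disjoint_def]
  intro w h₁ h₂
  obtain ⟨c, rfl⟩ := mem_span_singleton.mp h₁
  obtain ⟨d, hd⟩ := mem_span_singleton.mp h₂
  have hmem : c • f 1 - d • f 2 ∈ LinearMap.ker (A 0) := by simp [hd]
  obtain ⟨e, he⟩ := mem_span_singleton.mp (hA 0 ▸ hmem)
  have hc : -c = 0 := Fintype.linearIndependent_iff.mp hf ![e, -c, d]
    (by simp [Fin.sum_univ_three, he]; abel) 1
  rw [neg_eq_zero.mp hc, zero_smul]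

theorem triMat_mulVec_append (A₁ A₂ : Matrix (Fin 3) (Fin 4) ℝ) (u₁ u₂ : Fin 3 → ℝ)
    (x : Fin 4 → ℝ) (a b : ℝ) :
    triMat A₁ A₂ u₁ u₂ *ᵥ Fin.append x ![a, b] =
      Fin.append (A₁ *ᵥ x + a • u₁) (A₂ *ᵥ x + b • u₂) := by
  ext i
  fin_cases i <;>
    simp [mulVec, dotProduct, Fin.sum_univ_succ, triMat, Fin.append, Fin.addCases] <;> ring

theorem det_triMat_eq_zero_of_smul_eq_mulVec {A₁ A₂ : Matrix (Fin 3) (Fin 4) ℝ}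
    {u₁ u₂ : Fin 3 → ℝ} {X : Fin 4 → ℝ} {a b : ℝ} (ha : a ≠ 0) (h₁ : a • u₁ = A₁ *ᵥ X)
    (h₂ : b • u₂ = A₂ *ᵥ X) :
    (triMat A₁ A₂ u₁ u₂).det = 0 := by
  refine exists_mulVec_eq_zero_iff.mp ⟨Fin.append X ![-a, -b], fun h0 => ha ?_, ?_⟩
  · have h4 := congrFun h0 (Fin.natAdd 4 0)
    rw [Fin.append_right] at h4
    simpa using h4
  · rw [triMat_mulVec_append, neg_smul, neg_smul, h₁, h₂, add_neg_cancel, add_neg_cancel,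
      Fin.append_eq_zero_iff]
    exact ⟨rfl, rfl⟩

theorem five_le_rank_triMat {A₁ A₂ : Matrix (Fin 3) (Fin 4) ℝ} {u₁ u₂ : Fin 3 → ℝ}
    (hker : Disjoint (LinearMap.ker A₁.mulVecLin) (LinearMap.ker A₂.mulVecLin))
    (hu₁ : u₁ ∉ (LinearMap.ker A₂.mulVecLin).map A₁.mulVecLin) :
    5 ≤ (triMat A₁ A₂ u₁ u₂).rank := by
  suffices ∀ y, triMat A₁ A₂ u₁ u₂ *ᵥ y = 0 → y 5 = 0 → y = 0 by
    simpa using (triMat A₁ A₂ u₁ u₂).card_le_rank_add_one_of_mulVec_eq_zero 5 this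
  intro y hy hy5
  obtain ⟨x, a, rfl⟩ : ∃ x a, y = Fin.append x ![a, 0] :=
    ⟨_, y 4, by rw [← hy5]; exact (Fin.append_castAdd_natAdd_two y).symm⟩
  rw [triMat_mulVec_append, zero_smul, add_zero, Fin.append_eq_zero_iff] at hy
  obtain ⟨hx₁, hx₂⟩ := hy
  have ha : a = 0 := by
    by_contra ha
    refine hu₁ ⟨-a⁻¹ • x, (LinearMap.ker _).smul_mem _ hx₂, ?_⟩
    change A₁ *ᵥ (-a⁻¹ • x) = u₁
    rw [mulVec_smul, eq_neg_of_add_eq_zero_left hx₁, smul_neg, neg_smul, neg_neg, smul_smul,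
      inv_mul_cancel₀ ha, one_smul]
  have hx : x = 0 := disjoint_def.mp hker x (by simpa [ha] using hx₁) hx₂
  rw [hx, ha, Fin.append_eq_zero_iff]
  exact ⟨rfl, by ext i; fin_cases i <;> rfl⟩

theorem continuous_triMat (A₁ A₂ : Matrix (Fin 3) (Fin 4) ℝ) :
    Continuous fun u : (Fin 3 → ℝ) × (Fin 3 → ℝ) => triMat A₁ A₂ u.1 u.2 := by
  refine continuous_matrix fun i j => ?_
  simp only [triMat, of_apply]
  split_ifs <;> fun_prop

theorem isOpenQuotientMap_projectivization_mk :
    IsOpenQuotientMap (Quotient.mk (projectivizationSetoid ℝ (Fin 3 → ℝ))) := by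
  refine ⟨Quotient.mk_surjective, continuous_quot_mk, fun U hU => ?_⟩
  let scale (c : ℝˣ) (v : {v : Fin 3 → ℝ // v ≠ 0}) : {v : Fin 3 → ℝ // v ≠ 0} :=
    ⟨c • v.1, (smul_ne_zero_iff_ne c).mpr v.2⟩
  have hsat : Quotient.mk (projectivizationSetoid ℝ (Fin 3 → ℝ)) ⁻¹' (Quotient.mk _ '' U) =
      ⋃ c, scale c ⁻¹' U := by
    ext v
    simp only [Set.mem_preimage, Set.mem_image, Set.mem_iUnion, Quotient.eq]
    constructor
    · rintro ⟨w, hw, c, hc⟩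
      exact ⟨c, by rwa [show scale c v = w from Subtype.ext hc]⟩
    · rintro ⟨c, hc⟩
      exact ⟨scale c v, hc, c, rfl⟩
  refine isOpen_coinduced.mpr ?_
  change IsOpen (Quotient.mk _ ⁻¹' _)
  rw [hsat]
  exact isOpen_iUnion fun c => hU.preimage ((continuous_subtype_val.const_smul c).subtype_mk _)

def multiviewImage (A : Fin 3 → Matrix (Fin 3) (Fin 4) ℝ) :
    Set (Fin 3 → Projectivization ℝ (Fin 3 → ℝ)) :=
  {p | ∃ X : Fin 4 → ℝ, ∃ h : ∀ i, (A i).mulVec X ≠ 0,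
    ∀ i, p i = Projectivization.mk ℝ ((A i).mulVec X) (h i)}

theorem det_triMat_eq_zero_of_mem_closure {A : Fin 3 → Matrix (Fin 3) (Fin 4) ℝ}
    {u : Fin 3 → Fin 3 → ℝ} {hu : ∀ i, u i ≠ 0}
    (hmem : (fun i => Projectivization.mk ℝ (u i) (hu i)) ∈ closure (multiviewImage A))
    (j k : Fin 3) : (triMat (A j) (A k) (u j) (u k)).det = 0 := by
  let q : (Fin 3 → {v : Fin 3 → ℝ // v ≠ 0}) → Fin 3 → Projectivization ℝ (Fin 3 → ℝ) :=
    Pi.map fun _ => Quotient.mk _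
  have hq : IsOpenQuotientMap q := .piMap fun _ => isOpenQuotientMap_projectivization_mk
  let Z := {v : Fin 3 → {v : Fin 3 → ℝ // v ≠ 0} | (triMat (A j) (A k) (v j) (v k)).det = 0}
  have hZ : IsClosed Z :=
    isClosed_eq (Continuous.matrix_det (continuous_triMat (A j) (A k) |>.comp
      (((continuous_apply j).subtype_val).prodMk (continuous_apply k).subtype_val)))
      continuous_const
  have himage : q ⁻¹' multiviewImage A ⊆ Z := by
    rintro v ⟨X, hX, hv⟩
    have h (i : Fin 3) : Projectivization.mk ℝ ((A i).mulVec X) (hX i) =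
        Projectivization.mk ℝ (v i).1 (v i).2 := (hv i).symm
    obtain ⟨a, ha⟩ := (Projectivization.mk_eq_mk_iff ℝ _ _ _ _).mp (h j)
    obtain ⟨b, hb⟩ := (Projectivization.mk_eq_mk_iff ℝ _ _ _ _).mp (h k)
    exact det_triMat_eq_zero_of_smul_eq_mulVec a.ne_zero ha hb
  have hu' : (fun i => (⟨u i, hu i⟩ : {v : Fin 3 → ℝ // v ≠ 0})) ∈
      closure (q ⁻¹' multiviewImage A) := by
    rw [← hq.isOpenMap.preimage_closure_eq_closure_preimage hq.continuous]
    exact hmem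
  simpa only [Z, Set.mem_ofPred_eq] using closure_minimal himage hZ hu'

theorem multiview_variety_triangulable_general (A : Fin 3 → Matrix (Fin 3) (Fin 4) ℝ)
    (hA : ∀ i, (A i).rank = 3)
    (f : Fin 3 → Fin 4 → ℝ)
    (hker : ∀ i, (A i).mulVec (f i) = 0)
    (hgen : LinearIndependent ℝ f)
    (u : Fin 3 → Fin 3 → ℝ) (hu : ∀ i, u i ≠ 0)
    (hmem : (fun i => Projectivization.mk ℝ (u i) (hu i)) ∈
      closure {p : Fin 3 → Projectivization ℝ (Fin 3 → ℝ) |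
        ∃ X : Fin 4 → ℝ, ∃ h : ∀ i, (A i).mulVec X ≠ 0,
          ∀ i, p i = Projectivization.mk ℝ ((A i).mulVec X) (h i)}) :
    ∃ j k : Fin 3, j ≠ k ∧ (triMat (A j) (A k) (u j) (u k)).rank = 5 := by
  have hkerA (i : Fin 3) : LinearMap.ker (A i).mulVecLin = span ℝ {f i} :=
    (A i).ker_mulVecLin_eq_span_singleton (by simp [hA]) (hgen.ne_zero i) (hker i)
  obtain ⟨k, hk0, hk⟩ : ∃ k : Fin 3, 0 ≠ k ∧
      u 0 ∉ (LinearMap.ker (A k).mulVecLin).map (A 0).mulVecLin := by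
    by_contra! h
    exact hu 0 (disjoint_def.mp (disjoint_map_ker_of_ker_eq_span
      (A := fun i => (A i).mulVecLin) hgen hkerA) _ (h 1 (by decide)) (h 2 (by decide)))
  refine ⟨0, k, hk0, le_antisymm ?_ ?_⟩
  · simpa [Nat.lt_succ_iff] using (triMat _ _ _ _).rank_lt_card_of_det_eq_zero
      (det_triMat_eq_zero_of_mem_closure hmem 0 k)
  · refine five_le_rank_triMat ?_ hk
    rw [hkerA, hkerA]
    simpa using hgen.disjoint_span_image (s := {0}) (t := {k}) (by simpa using hk0)

/-- For three cameras with focal points in general position (linearly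
independent in `ℝ⁴`), every point `u = (u₁,u₂,u₃)` of the multiview variety `V_A`
(the closure in `(P²)³` of the image of `X ↦ (A₁X,A₂X,A₃X)`) is triangulable:
some pair `(j,k)` has `rank B^{jk} = 5`. -/
theorem multiview_variety_triangulable (A : Fin 3 → Matrix (Fin 3) (Fin 4) ℝ)
    (hA : ∀ i, (A i).rank = 3)
    (f : Fin 3 → Fin 4 → ℝ) (hf : ∀ i, f i ≠ 0)
    (hker : ∀ i, (A i).mulVec (f i) = 0)
    (hgen : LinearIndependent ℝ f)
    (u : Fin 3 → Fin 3 → ℝ) (hu : ∀ i, u i ≠ 0)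
    (hmem : (fun i => Projectivization.mk ℝ (u i) (hu i)) ∈
      closure {p : Fin 3 → Projectivization ℝ (Fin 3 → ℝ) |
        ∃ X : Fin 4 → ℝ, ∃ h : ∀ i, (A i).mulVec X ≠ 0,
          ∀ i, p i = Projectivization.mk ℝ ((A i).mulVec X) (h i)}) :
    ∃ j k : Fin 3, j ≠ k ∧ (triMat (A j) (A k) (u j) (u k)).rank = 5 :=
  multiview_variety_triangulable_general A hA f hker hgen u hu hmem
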